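/- arXiv:hep-th/0609003 — 6 statements merged into one kernel-verified Lean document; each statement's English description precedes it below -/
import Mathlib

section
/- With Θ a self-adjoint unitary involution on a Hilbert space E and E₊ a closed subspace on which the form ⟨Θ·,·⟩ is positive semidefinite with null space N: if T is a bounded operator on E such that both T and Θ T* Θ map E₊ into E₊, then T maps N into N, and hence T descends to a well-defined linear operator T̂ on the quotient E₊/N. -/
open scoped ComplexInnerProductSpace

/-- **Condition for Osterwalder–Schrader quantization.** With `Θ` a self-adjoint unitary
involution on a Hilbert space `E` and `E₊` a closed subspace on which the form `⟪Θ·,·⟫` is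
positive semidefinite, with null space `N = {A ∈ E₊ : ⟪ΘA,A⟫ = 0}`: if `T` is a bounded
operator on `E` such that both `T` and `Θ T* Θ` map `E₊` into `E₊`, then `T` maps `N` into
`N`; hence `T` descends to a well-defined linear operator on the quotient `E₊/N` (two
vectors of `E₊` congruent mod `N` have images congruent mod `N`). -/
theorem os_quantization_condition
    {E : Type*} [NormedAddCommGroup E] [InnerProductSpace ℂ E] [CompleteSpace E]
    (Θ : E →L[ℂ] E)
    (hΘ_unitary : ∀ x y : E, ⟪Θ x, Θ y⟫ = ⟪x, y⟫)
    (hΘ_invol : ∀ x : E, Θ (Θ x) = x)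
    (hΘ_sa : ∀ x y : E, ⟪Θ x, y⟫ = ⟪x, Θ y⟫)
    (Eplus : Submodule ℂ E) (hEplus_closed : IsClosed (Eplus : Set E))
    (hpos : ∀ A ∈ Eplus, 0 ≤ (⟪Θ A, A⟫).re ∧ (⟪Θ A, A⟫).im = 0)
    (N : Set E) (hN : N = {A | A ∈ Eplus ∧ ⟪Θ A, A⟫ = 0})
    (T : E →L[ℂ] E)
    (hT : ∀ A ∈ Eplus, T A ∈ Eplus)
    (hTplus : ∀ A ∈ Eplus, (Θ ∘L (ContinuousLinearMap.adjoint T) ∘L Θ) A ∈ Eplus) :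
    (∀ A ∈ N, T A ∈ N) ∧
    (∀ A B : E, A ∈ Eplus → B ∈ Eplus → A - B ∈ N → T A - T B ∈ N) := by
  -- Re part of the form vanishes against any B when A is null
  have hre : ∀ A ∈ Eplus, ⟪Θ A, A⟫ = 0 → ∀ B ∈ Eplus, (⟪Θ A, B⟫ : ℂ).re = 0 := by
    intro A hA hAA B hB
    set c : ℝ := (⟪Θ A, B⟫ : ℂ).re with hc
    set r : ℝ := (⟪Θ B, B⟫ : ℂ).re with hrdef
    have hr0 : 0 ≤ r := (hpos B hB).1
    have hconj : (⟪Θ B, A⟫ : ℂ) = starRingEnd ℂ ⟪Θ A, B⟫ := by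
      rw [← inner_conj_symm, hΘ_sa]
    have hq : ∀ t : ℝ, 0 ≤ 2 * t * c + t ^ 2 * r := by
      intro t
      have hmem : A + (t : ℂ) • B ∈ Eplus := Eplus.add_mem hA (Eplus.smul_mem _ hB)
      have h1 := (hpos _ hmem).1
      have expand : (⟪Θ (A + (t : ℂ) • B), A + (t : ℂ) • B⟫ : ℂ)
          = ⟪Θ A, A⟫ + (t : ℂ) * ⟪Θ A, B⟫ + (t : ℂ) * ⟪Θ B, A⟫
            + (t : ℂ) ^ 2 * ⟪Θ B, B⟫ := by
        simp only [map_add, map_smul, inner_add_left, inner_add_right,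
          inner_smul_left, inner_smul_right, Complex.conj_ofReal]
        ring
      rw [expand, hAA, hconj] at h1
      simp only [Complex.add_re, Complex.mul_re, Complex.zero_re, Complex.ofReal_re,
        Complex.ofReal_im, Complex.conj_re, Complex.conj_im, ← Complex.ofReal_pow] at h1
      nlinarith [h1]
    have hkey := hq (-c / (r + 1))
    have hrpos : (0:ℝ) < r + 1 := by linarith
    have heq : 2 * (-c / (r + 1)) * c + (-c / (r + 1)) ^ 2 * r
        = -(c ^ 2 * (r + 2)) / (r + 1) ^ 2 := by field_simp; ring
    rw [heq] at hkey
    have hy : (0:ℝ) < (r + 1) ^ 2 := by positivity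
    have h2 : 0 ≤ -(c ^ 2 * (r + 2)) := by
      have := mul_nonneg hkey hy.le
      rwa [div_mul_cancel₀ _ (ne_of_gt hy)] at this
    nlinarith [sq_nonneg c]
  -- full vanishing against any B
  have key : ∀ A ∈ Eplus, ⟪Θ A, A⟫ = 0 → ∀ B ∈ Eplus, (⟪Θ A, B⟫ : ℂ) = 0 := by
    intro A hA hAA B hB
    have h1 := hre A hA hAA B hB
    have h2 := hre A hA hAA (Complex.I • B) (Eplus.smul_mem _ hB)
    rw [inner_smul_right] at h2
    simp only [Complex.mul_re, Complex.I_re, Complex.I_im] at h2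
    apply Complex.ext <;> simp_all
  -- T maps null vectors to null vectors
  have main : ∀ A ∈ N, T A ∈ N := by
    intro A hAN
    rw [hN] at hAN ⊢
    obtain ⟨hA, hAA⟩ := hAN
    have hTA : T A ∈ Eplus := hT A hA
    refine ⟨hTA, ?_⟩
    set C : E := (Θ ∘L (ContinuousLinearMap.adjoint T) ∘L Θ) (T A) with hC
    have hCmem : C ∈ Eplus := hTplus (T A) hTA
    have hvanish : (⟪Θ A, C⟫ : ℂ) = 0 := key A hA hAA C hCmem
    have hcalc : (⟪Θ A, C⟫ : ℂ) = ⟪T A, Θ (T A)⟫ := by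
      calc (⟪Θ A, C⟫ : ℂ)
          = ⟪Θ A, Θ ((ContinuousLinearMap.adjoint T) (Θ (T A)))⟫ := rfl
        _ = ⟪A, (ContinuousLinearMap.adjoint T) (Θ (T A))⟫ := hΘ_unitary _ _
        _ = ⟪T A, Θ (T A)⟫ := ContinuousLinearMap.adjoint_inner_right _ _ _
    have : (⟪T A, Θ (T A)⟫ : ℂ) = 0 := by rw [← hcalc]; exact hvanish
    rw [← inner_conj_symm, this, map_zero]
  refine ⟨main, ?_⟩
  intro A B hA hB hAB
  have := main _ hAB
  rwa [map_sub] at this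
end

section
/- In the Osterwalder–Schrader setting, if T is bounded on E and both T and Θ T* Θ preserve E₊, then the quantized operator T̂ on the quotient pre-Hilbert space E₊/N satisfies ⟨T̂ Â, B̂⟩ = ⟨Â, (ΘT*Θ)^ B̂⟩ for all A, B ∈ E₊; i.e., the adjoint of the quantization of T is the quantization of T⁺ = Θ T* Θ. -/
open scoped ComplexInnerProductSpace

/-- **Adjoint of the quantized operator.** In the Osterwalder–Schrader setting, if `T` is
bounded on `E` and both `T` and `T⁺ = Θ T* Θ` preserve `E₊`, then on the quotient
pre-Hilbert space `E₊/N` (with inner product `⟨Â, B̂⟩ = ⟪ΘA, B⟫`) the quantized operator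
satisfies `⟨T̂ Â, B̂⟩ = ⟨Â, (T⁺)^ B̂⟩` for all `A, B ∈ E₊`; i.e. the adjoint of the
quantization of `T` is the quantization of `Θ T* Θ`. -/
theorem os_adjoint_of_quantization
    {E : Type*} [NormedAddCommGroup E] [InnerProductSpace ℂ E] [CompleteSpace E]
    (Θ : E →L[ℂ] E)
    (hΘ_unitary : ∀ x y : E, ⟪Θ x, Θ y⟫ = ⟪x, y⟫)
    (hΘ_invol : ∀ x : E, Θ (Θ x) = x)
    (hΘ_sa : ∀ x y : E, ⟪Θ x, y⟫ = ⟪x, Θ y⟫)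
    (Eplus : Submodule ℂ E) (hEplus_closed : IsClosed (Eplus : Set E))
    (hpos : ∀ A ∈ Eplus, 0 ≤ (⟪Θ A, A⟫).re ∧ (⟪Θ A, A⟫).im = 0)
    (T : E →L[ℂ] E)
    (hT : ∀ A ∈ Eplus, T A ∈ Eplus)
    (hTplus : ∀ A ∈ Eplus, (Θ ∘L (ContinuousLinearMap.adjoint T) ∘L Θ) A ∈ Eplus) :
    ∀ A ∈ Eplus, ∀ B ∈ Eplus,
      ⟪Θ (T A), B⟫ = ⟪Θ A, (Θ ∘L (ContinuousLinearMap.adjoint T) ∘L Θ) B⟫ := by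
  intro A _ B _
  calc ⟪Θ (T A), B⟫ = ⟪T A, Θ B⟫ := hΘ_sa _ _
    _ = ⟪A, ContinuousLinearMap.adjoint T (Θ B)⟫ := by
        rw [ContinuousLinearMap.adjoint_inner_right]
    _ = ⟪Θ A, Θ (ContinuousLinearMap.adjoint T (Θ B))⟫ := (hΘ_unitary _ _).symm
    _ = ⟪Θ A, (Θ ∘L (ContinuousLinearMap.adjoint T) ∘L Θ) B⟫ := rfl
end

section
/- Let U be unitary on E with U(E₊) ⊆ E₊ and U⁻¹Θ = ΘU. Then U admits an Osterwalder–Schrader quantization Û on H = completion of E₊/N, and Û is a symmetric (self-adjoint on its domain) operator: ⟨Û Â, B̂⟩ = ⟨Â, Û B̂⟩ for all A,B ∈ E₊. -/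
open scoped ComplexInnerProductSpace

private lemma aux_quad (a d : ℝ) (h : ∀ r : ℝ, 0 ≤ 2*r*a + r^2*d) : a = 0 := by
  by_contra ha
  have ha2 : 0 < a^2 := by positivity
  rcases le_or_gt d 1 with hd1 | hd1
  · have h1 := h (-a)
    nlinarith
  · have hdp : 0 < d := by linarith
    have h1 := h (-a/d)
    have he : 2*(-a/d)*a + (-a/d)^2*d = -(a^2)/d := by
      field_simp; ring
    rw [he] at h1
    have : 0 < a^2/d := by positivity
    have : -(a^2)/d < 0 := by rw [neg_div]; linarith
    linarith

/-- **Self-adjointness (reflected isometries).** Let `U` be unitary on `E` with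
`U(E₊) ⊆ E₊` and `U⁻¹ Θ = Θ U`. Then `U` admits an Osterwalder–Schrader quantization `Û`
on `H` = completion of `E₊/N` (i.e. `U` maps the null space `N` into itself), and `Û` is
symmetric for the quotient inner product `⟨Â, B̂⟩ = ⟪ΘA, B⟫`:
`⟨Û Â, B̂⟩ = ⟨Â, Û B̂⟩` for all `A, B ∈ E₊`. It is not assumed that `U⁻¹` preserves `E₊`. -/
theorem os_quantization_selfadjoint
    {E : Type*} [NormedAddCommGroup E] [InnerProductSpace ℂ E] [CompleteSpace E]
    (Θ : E →L[ℂ] E)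
    (hΘ_unitary : ∀ x y : E, ⟪Θ x, Θ y⟫ = ⟪x, y⟫)
    (hΘ_invol : ∀ x : E, Θ (Θ x) = x)
    (hΘ_sa : ∀ x y : E, ⟪Θ x, y⟫ = ⟪x, Θ y⟫)
    (Eplus : Submodule ℂ E) (hEplus_closed : IsClosed (Eplus : Set E))
    (hpos : ∀ A ∈ Eplus, 0 ≤ (⟪Θ A, A⟫).re ∧ (⟪Θ A, A⟫).im = 0)
    (U V : E →L[ℂ] E)
    (hU_unitary : ∀ x y : E, ⟪U x, U y⟫ = ⟪x, y⟫)
    -- `V = U⁻¹`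
    (hUV : ∀ x : E, V (U x) = x) (hVU : ∀ x : E, U (V x) = x)
    (hU_plus : ∀ A ∈ Eplus, U A ∈ Eplus)
    -- the reflected condition `U⁻¹ Θ = Θ U`
    (hrefl : ∀ x : E, V (Θ x) = Θ (U x)) :
    -- `U` maps the null space into itself, so the quantization `Û` is well defined on `E₊/N`
    (∀ A ∈ Eplus, ⟪Θ A, A⟫ = 0 → ⟪Θ (U A), U A⟫ = 0) ∧
    -- and `Û` is symmetric (self-adjoint on its domain)
    (∀ A ∈ Eplus, ∀ B ∈ Eplus, ⟪Θ (U A), B⟫ = ⟪Θ A, U B⟫) := by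
  have sym : ∀ x y : E, ⟪Θ (U x), y⟫ = ⟪Θ x, U y⟫ := by
    intro x y
    rw [← hrefl, ← hU_unitary (V (Θ x)) y, hVU]
  have herm : ∀ x y : E, ⟪Θ y, x⟫ = starRingEnd ℂ ⟪Θ x, y⟫ := by
    intro x y
    rw [hΘ_sa y x, ← inner_conj_symm]
  -- the null space lemma: a degenerate vector is orthogonal (w.r.t. the OS form) to all of E₊
  have null_orth : ∀ x ∈ Eplus, ⟪Θ x, x⟫ = 0 → ∀ y ∈ Eplus, ⟪Θ x, y⟫ = 0 := by
    intro x hx hxx y hy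
    set c : ℂ := ⟪Θ x, y⟫ with hc
    set d : ℝ := (⟪Θ y, y⟫).re with hd
    have hdim : (⟪Θ y, y⟫).im = 0 := (hpos y hy).2
    have hexp : ∀ t : ℂ, ⟪Θ (x + t • y), x + t • y⟫
        = t * c + (starRingEnd ℂ) t * (starRingEnd ℂ) c + (starRingEnd ℂ) t * t * ⟪Θ y, y⟫ := by
      intro t
      rw [map_add, map_smul]
      rw [inner_add_left, inner_add_right, inner_add_right, inner_smul_left,
        inner_smul_left, inner_smul_right, inner_smul_right, hxx, herm x y, ← hc]
      ring
    have hmem : ∀ t : ℂ, x + t • y ∈ Eplus := fun t =>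
      Eplus.add_mem hx (Eplus.smul_mem t hy)
    have hre : c.re = 0 := by
      apply aux_quad c.re d
      intro r
      have h1 := (hpos _ (hmem (r : ℂ))).1
      rw [hexp (r : ℂ)] at h1
      simp only [Complex.conj_ofReal, Complex.add_re, Complex.mul_re, Complex.mul_im,
        Complex.conj_re, Complex.conj_im, Complex.ofReal_re, Complex.ofReal_im] at h1
      nlinarith [h1, hdim, hd]
    have him : c.im = 0 := by
      have := aux_quad (-c.im) d ?_
      · linarith
      intro r
      have h1 := (hpos _ (hmem ((r : ℂ) * Complex.I))).1
      rw [hexp ((r : ℂ) * Complex.I)] at h1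
      simp only [map_mul, Complex.conj_ofReal, Complex.conj_I, Complex.add_re, Complex.mul_re,
        Complex.mul_im, Complex.I_re, Complex.I_im, Complex.conj_re, Complex.conj_im,
        Complex.ofReal_re, Complex.ofReal_im, Complex.neg_re, Complex.neg_im] at h1
      nlinarith [h1, hdim, hd]
    exact Complex.ext hre him
  constructor
  · intro A hA hA0
    rw [sym A (U A)]
    exact null_orth A hA hA0 (U (U A)) (hU_plus _ (hU_plus _ hA))
  · intro A _ B _
    exact sym A B
end

section
/- Let U be unitary on E with U(E₊) ⊆ E₊, U⁻¹(E₊) ⊆ E₊, and [U,Θ] = 0. Then U and U⁻¹ admit Osterwalder–Schrader quantizations Û and (U⁻¹)^ on E₊/N, these are mutually inverse, and Û preserves the quotient inner product: ⟨Û Â, Û B̂⟩ = ⟨Â, B̂⟩; hence Û extends to a unitary on H. -/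
open scoped ComplexInnerProductSpace

/-- **Unitarity (reflection-invariant isometries).** Let `U` be unitary on `E` with
`U(E₊) ⊆ E₊`, `U⁻¹(E₊) ⊆ E₊` and `[U, Θ] = 0`. Then `U` and `U⁻¹` admit
Osterwalder–Schrader quantizations on `E₊/N` (both map the null space `N` into itself),
these are mutually inverse, and `Û` preserves the quotient inner product
`⟨Â, B̂⟩ = ⟪ΘA, B⟫`: `⟨Û Â, Û B̂⟩ = ⟨Â, B̂⟩`; hence `Û` extends to a unitary on `H`. -/
theorem os_quantization_unitary
    {E : Type*} [NormedAddCommGroup E] [InnerProductSpace ℂ E] [CompleteSpace E]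
    (Θ : E →L[ℂ] E)
    (hΘ_unitary : ∀ x y : E, ⟪Θ x, Θ y⟫ = ⟪x, y⟫)
    (hΘ_invol : ∀ x : E, Θ (Θ x) = x)
    (hΘ_sa : ∀ x y : E, ⟪Θ x, y⟫ = ⟪x, Θ y⟫)
    (Eplus : Submodule ℂ E) (hEplus_closed : IsClosed (Eplus : Set E))
    (hpos : ∀ A ∈ Eplus, 0 ≤ (⟪Θ A, A⟫).re ∧ (⟪Θ A, A⟫).im = 0)
    (U V : E →L[ℂ] E)
    (hU_unitary : ∀ x y : E, ⟪U x, U y⟫ = ⟪x, y⟫)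
    -- `V = U⁻¹`
    (hUV : ∀ x : E, V (U x) = x) (hVU : ∀ x : E, U (V x) = x)
    (hU_plus : ∀ A ∈ Eplus, U A ∈ Eplus)
    (hV_plus : ∀ A ∈ Eplus, V A ∈ Eplus)
    -- `U` commutes with the reflection `Θ`
    (hcomm : ∀ x : E, U (Θ x) = Θ (U x)) :
    -- `U` and `U⁻¹` map the null space into itself, so both have quantizations
    (∀ A ∈ Eplus, ⟪Θ A, A⟫ = 0 → ⟪Θ (U A), U A⟫ = 0) ∧
    (∀ A ∈ Eplus, ⟪Θ A, A⟫ = 0 → ⟪Θ (V A), V A⟫ = 0) ∧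
    -- the quantizations are mutually inverse
    (∀ A ∈ Eplus, V (U A) = A ∧ U (V A) = A) ∧
    -- `Û` preserves the quotient inner product, hence extends to a unitary on `H`
    (∀ A ∈ Eplus, ∀ B ∈ Eplus, ⟪Θ (U A), U B⟫ = ⟪Θ A, B⟫) := by
  have keyU : ∀ A B : E, ⟪Θ (U A), U B⟫ = ⟪Θ A, B⟫ := fun A B => by
    rw [← hcomm, hU_unitary]
  have keyV : ∀ A B : E, ⟪Θ (V A), V B⟫ = ⟪Θ A, B⟫ := fun A B => by
    rw [← hU_unitary (Θ (V A)) (V B), hcomm, hVU, hVU]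
  exact ⟨fun A _ h => by rw [keyU, h], fun A _ h => by rw [keyV, h],
    fun A _ => ⟨hUV A, hVU A⟩, fun A _ B _ => keyU A B⟩
end

section
/- A self-adjoint contraction semigroup: if R : [0,∞) → bounded operators on a Hilbert space H is strongly continuous, R(0) = I, each R(t) is self-adjoint, ‖R(t)‖ ≤ 1, and R(t)R(s) = R(t+s), then there exists a densely defined positive self-adjoint operator H₀ with R(t) = exp(−tH₀) for all t ≥ 0; moreover any vector Ω with R(t)Ω = Ω for all t satisfies H₀Ω = 0. -/
/-!
Let `B = ∫₀^∞ e^{-s} R(s) ds`, formally `(1 + H₀)⁻¹`, and set `H₀ := B⁻¹ - 1` on the range of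
`B`. Since `R(s) = R(s/2)²`, every `R(s)` and hence `B` is positive; together with `‖B‖ ≤ 1` this
gives `B² ≤ B`, which is the positivity of `H₀`. Shifting the integral,
`R(t) B v = e^t (B v - ∫₀^t e^{-s} R(s) v ds)`, so `t ↦ R(t) B v` has derivative
`-R(t) (v - B v) = -R(t) H₀ (B v)`; in particular `B v = 0` forces `R(t) v = 0` for `t > 0`,
hence `v = 0`. Being self-adjoint and injective, `B` has dense range, and the adjoint relation
`⟪H₀† y, B v⟫ = ⟪y, v - B v⟫` says `B (H₀† y + y) = y`, so `H₀† = H₀`. An invariant `Ω` has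
`B Ω = Ω`, i.e. `H₀ Ω = 0`.
-/

open MeasureTheory Set Filter Topology
open scoped ComplexInnerProductSpace InnerProductSpace

namespace ContinuousLinearMap

variable {𝕜 H : Type*} [RCLike 𝕜] [NormedAddCommGroup H] [InnerProductSpace 𝕜 H]

theorem IsPositive.norm_apply_sq_le_re_inner {B : H →L[𝕜] H} (hpos : B.IsPositive)
    (hnorm : ‖B‖ ≤ 1) (v : H) : ‖B v‖ ^ 2 ≤ RCLike.re ⟪B v, v⟫_𝕜 := by
  have hw := hpos.re_inner_nonneg_left (v - B v)
  have hsq : ⟪B (B v), v⟫_𝕜 = ‖B v‖ ^ 2 := by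
    rw [hpos.inner_left_eq_inner_right, inner_self_eq_norm_sq_to_K]
  have hle : RCLike.re ⟪B (B v), B v⟫_𝕜 ≤ ‖B v‖ ^ 2 :=
    calc RCLike.re ⟪B (B v), B v⟫_𝕜 ≤ ‖B (B v)‖ * ‖B v‖ := re_inner_le_norm _ _
      _ ≤ ‖B v‖ * ‖B v‖ := by gcongr; exact B.le_of_opNorm_le hnorm _ |>.trans_eq (one_mul _)
      _ = ‖B v‖ ^ 2 := (sq _).symm
  rw [map_sub, inner_sub_left, inner_sub_right, inner_sub_right, hsq,
    inner_self_eq_norm_sq_to_K] at hw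
  simp only [map_sub, ← RCLike.ofReal_pow, RCLike.ofReal_re] at hw
  linarith

variable {B : H →L[𝕜] H}

theorem _root_.IsSelfAdjoint.denseRange_of_injective [CompleteSpace H] (hsa : IsSelfAdjoint B)
    (hB : Function.Injective B) : DenseRange B := by
  have : (LinearMap.range (B : H →ₗ[𝕜] H)).topologicalClosure = ⊤ := by
    rw [Submodule.topologicalClosure_eq_top_iff, orthogonal_range, hsa.adjoint_eq]
    exact LinearMap.ker_eq_bot.mpr hB
  exact Submodule.dense_iff_topologicalClosure_eq_top.mpr this

variable (hB : Function.Injective B)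

variable (B) in
noncomputable def invSubOne : H →ₗ.[𝕜] H where
  domain := LinearMap.range (B : H →ₗ[𝕜] H)
  toFun := (LinearEquiv.ofInjective (B : H →ₗ[𝕜] H) hB).symm.toLinearMap -
    (LinearMap.range (B : H →ₗ[𝕜] H)).subtype

theorem invSubOne_apply {x : (invSubOne B hB).domain} {v : H} (hx : B v = x) :
    invSubOne B hB x = v - B v := by
  have : x = LinearEquiv.ofInjective (B : H →ₗ[𝕜] H) hB v := Subtype.ext hx.symm
  simp [invSubOne, this]

theorem re_inner_invSubOne_apply_self_nonneg (hpos : B.IsPositive) (hnorm : ‖B‖ ≤ 1)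
    (x : (invSubOne B hB).domain) : 0 ≤ RCLike.re ⟪invSubOne B hB x, x⟫_𝕜 := by
  obtain ⟨v, hv⟩ : ∃ v, B v = x := x.2
  rw [invSubOne_apply hB hv, ← hv, inner_sub_left, map_sub, inner_self_eq_norm_sq_to_K,
    ← hpos.inner_left_eq_inner_right, ← RCLike.ofReal_pow, RCLike.ofReal_re]
  linarith [hpos.norm_apply_sq_le_re_inner hnorm v]

theorem invSubOne_adjoint [CompleteSpace H] (hsa : IsSelfAdjoint B) :
    (invSubOne B hB).adjoint = invSubOne B hB := by
  have hdense : Dense ((invSubOne B hB).domain : Set H) := hsa.denseRange_of_injective hB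
  have hBsymm : ∀ u w, ⟪B u, w⟫_𝕜 = ⟪u, B w⟫_𝕜 := hsa.isSymmetric
  have hsymm : (invSubOne B hB).IsFormalAdjoint (invSubOne B hB) := by
    intro x y
    obtain ⟨u, hu⟩ : ∃ u, B u = x := x.2
    obtain ⟨w, hw⟩ : ∃ w, B w = y := y.2
    rw [invSubOne_apply hB hu, invSubOne_apply hB hw, ← hu, ← hw, inner_sub_left,
      inner_sub_right, hBsymm u w]
  have hB_adjoint_add : ∀ y : (invSubOne B hB).adjoint.domain,
      B ((invSubOne B hB).adjoint y + y) = y := by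
    intro y
    refine ext_inner_right 𝕜 fun v => ?_
    have hy := LinearPMap.adjoint_isFormalAdjoint hdense y ⟨B v, v, rfl⟩
    rw [invSubOne_apply hB rfl] at hy
    rw [map_add, inner_add_left, hBsymm, hBsymm, hy, inner_sub_right, sub_add_cancel]
  refine le_antisymm ?_ (hsymm.le_adjoint hdense)
  refine ⟨fun y hy => ⟨_, hB_adjoint_add ⟨y, hy⟩⟩, fun y x hxy => ?_⟩
  rw [invSubOne_apply hB ((hB_adjoint_add y).trans hxy), hB_adjoint_add, add_sub_cancel_right]

end ContinuousLinearMap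

theorem setIntegral_Ioi_comp_add_left {E : Type*} [NormedAddCommGroup E] [NormedSpace ℝ E]
    (f : ℝ → E) (a t : ℝ) : ∫ s in Ioi a, f (t + s) = ∫ s in Ioi (t + a), f s := by
  have := (measurePreserving_add_left volume t).setIntegral_preimage_emb
    (measurableEmbedding_addLeft t) f (Ioi (t + a))
  rwa [preimage_const_add_Ioi, add_sub_cancel_left] at this

structure IsContractionSemigroup {E : Type*} [NormedAddCommGroup E] [NormedSpace ℂ E]
    (R : ℝ → E →L[ℂ] E) : Prop where
  continuousOn_apply : ∀ v : E, ContinuousOn (fun t : ℝ => R t v) (Ici 0)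
  zero_eq_id : R 0 = ContinuousLinearMap.id ℂ E
  norm_le_one : ∀ t : ℝ, 0 ≤ t → ‖R t‖ ≤ 1
  comp_eq_add : ∀ t s : ℝ, 0 ≤ t → 0 ≤ s → (R t).comp (R s) = R (t + s)

namespace IsContractionSemigroup

section Banach

variable {E : Type*} [NormedAddCommGroup E] [NormedSpace ℂ E] {R : ℝ → E →L[ℂ] E}

theorem apply_apply (hR : IsContractionSemigroup R) {t s : ℝ} (ht : 0 ≤ t) (hs : 0 ≤ s)
    (v : E) : R t (R s v) = R (t + s) v := by
  rw [← hR.comp_eq_add t s ht hs, ContinuousLinearMap.comp_apply]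

theorem norm_apply_le (hR : IsContractionSemigroup R) {t : ℝ} (ht : 0 ≤ t) (v : E) :
    ‖R t v‖ ≤ ‖v‖ :=
  ((R t).le_of_opNorm_le (hR.norm_le_one t ht) v).trans_eq (one_mul _)

theorem norm_exp_neg_smul_apply_le (hR : IsContractionSemigroup R) {s : ℝ} (hs : 0 ≤ s) (v : E) :
    ‖Real.exp (-s) • R s v‖ ≤ Real.exp (-s) * ‖v‖ := by
  rw [norm_smul, Real.norm_of_nonneg (Real.exp_pos _).le]
  gcongr
  exact hR.norm_apply_le hs v

theorem continuousOn_exp_neg_smul_apply (hR : IsContractionSemigroup R) (v : E) :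
    ContinuousOn (fun s => Real.exp (-s) • R s v) (Ici 0) :=
  (Real.continuous_exp.comp continuous_neg).continuousOn.smul (hR.continuousOn_apply v)

theorem integrableOn_exp_neg_smul_apply (hR : IsContractionSemigroup R) (v : E) :
    IntegrableOn (fun s => Real.exp (-s) • R s v) (Ioi 0) := by
  refine Integrable.mono' (g := fun s => Real.exp (-s) * ‖v‖) ?_
    ((hR.continuousOn_exp_neg_smul_apply v).mono Ioi_subset_Ici_self
      |>.aestronglyMeasurable measurableSet_Ioi) ?_
  · simpa using (exp_neg_integrableOn_Ioi 0 one_pos).mul_const ‖v‖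
  · filter_upwards [self_mem_ae_restrict measurableSet_Ioi] with s hs
      using hR.norm_exp_neg_smul_apply_le (le_of_lt hs) v

theorem norm_integral_exp_neg_smul_apply_le (hR : IsContractionSemigroup R) (v : E) :
    ‖∫ s in Ioi 0, Real.exp (-s) • R s v‖ ≤ ‖v‖ :=
  calc ‖∫ s in Ioi 0, Real.exp (-s) • R s v‖ ≤ ∫ s in Ioi 0, Real.exp (-s) * ‖v‖ := by
        refine norm_integral_le_of_norm_le ?_ ?_
        · simpa using (exp_neg_integrableOn_Ioi 0 one_pos).mul_const ‖v‖
        · filter_upwards [self_mem_ae_restrict measurableSet_Ioi] with s hs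
            using hR.norm_exp_neg_smul_apply_le (le_of_lt hs) v
    _ = ‖v‖ := by rw [integral_mul_const, integral_exp_neg_Ioi_zero, one_mul]

noncomputable def resolvent (hR : IsContractionSemigroup R) : E →L[ℂ] E :=
  LinearMap.mkContinuous
    { toFun v := ∫ s in Ioi 0, Real.exp (-s) • R s v
      map_add' v w := by
        rw [← integral_add (hR.integrableOn_exp_neg_smul_apply v)
          (hR.integrableOn_exp_neg_smul_apply w)]
        simp only [map_add, smul_add]
      map_smul' c v := by
        rw [← integral_smul]
        simp only [map_smul, RingHom.id_apply, smul_comm c] }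
    1 fun v => (hR.norm_integral_exp_neg_smul_apply_le v).trans_eq (one_mul _).symm

theorem resolvent_apply (hR : IsContractionSemigroup R) (v : E) :
    hR.resolvent v = ∫ s in Ioi 0, Real.exp (-s) • R s v := rfl

theorem norm_resolvent_le (hR : IsContractionSemigroup R) : ‖hR.resolvent‖ ≤ 1 :=
  LinearMap.mkContinuous_norm_le _ zero_le_one _

variable [CompleteSpace E]

theorem resolvent_apply_eq_self (hR : IsContractionSemigroup R) {v : E}
    (hv : ∀ t : ℝ, 0 ≤ t → R t v = v) : hR.resolvent v = v := by
  rw [resolvent_apply, setIntegral_congr_fun measurableSet_Ioi fun s hs => by rw [hv s hs.le],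
    integral_smul_const, integral_exp_neg_Ioi_zero, one_smul]

theorem apply_resolvent (hR : IsContractionSemigroup R) {t : ℝ} (ht : 0 ≤ t) (v : E) :
    R t (hR.resolvent v) =
      Real.exp t • (hR.resolvent v - ∫ s in 0..t, Real.exp (-s) • R s v) := by
  have hint := hR.integrableOn_exp_neg_smul_apply v
  calc R t (hR.resolvent v) = ∫ s in Ioi 0, R t (Real.exp (-s) • R s v) :=
        ((R t).integral_comp_comm hint).symm
    _ = ∫ s in Ioi 0, Real.exp t • (Real.exp (-(t + s)) • R (t + s) v) := by
        refine setIntegral_congr_fun measurableSet_Ioi fun s hs => ?_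
        rw [(R t).map_smul_of_tower, hR.apply_apply ht (le_of_lt hs), smul_smul, ← Real.exp_add,
          neg_add, add_neg_cancel_left]
    _ = Real.exp t • ∫ s in Ioi t, Real.exp (-s) • R s v := by
        rw [integral_smul, setIntegral_Ioi_comp_add_left (fun s => Real.exp (-s) • R s v), add_zero]
    _ = _ := by
        rw [resolvent_apply, ← intervalIntegral.integral_interval_add_Ioi hint
          (hint.mono_set (Ioi_subset_Ioi ht)), add_sub_cancel_left]

theorem hasDerivAt_apply_resolvent (hR : IsContractionSemigroup R) {t : ℝ} (ht : 0 < t)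
    (v : E) : HasDerivAt (fun s => R s (hR.resolvent v)) (-R t (v - hR.resolvent v)) t := by
  have hφ := hR.continuousOn_exp_neg_smul_apply v
  have hFTC : HasDerivAt (fun s => ∫ u in 0..s, Real.exp (-u) • R u v)
      (Real.exp (-t) • R t v) t :=
    intervalIntegral.integral_hasDerivAt_right
      (hφ.mono (uIcc_of_le ht.le ▸ Icc_subset_Ici_self)).intervalIntegrable
      ((hφ.mono Ioi_subset_Ici_self).stronglyMeasurableAtFilter isOpen_Ioi t ht)
      (hφ.continuousAt (Ici_mem_nhds ht))
  refine ((Real.hasDerivAt_exp t).smul (hFTC.const_sub (hR.resolvent v))).congr_of_eventuallyEq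
    ?_ |>.congr_deriv ?_
  · filter_upwards [Ioi_mem_nhds ht] with s hs using hR.apply_resolvent hs.le v
  · rw [← hR.apply_resolvent ht.le, smul_neg, smul_smul, ← Real.exp_add, add_neg_cancel,
      Real.exp_zero, one_smul, map_sub]
    abel

theorem resolvent_injective (hR : IsContractionSemigroup R) :
    Function.Injective hR.resolvent := by
  refine (injective_iff_map_eq_zero _).mpr fun v hv => ?_
  have hvanish : ∀ t ∈ Ioi (0 : ℝ), R t v = 0 := fun t ht => by
    have hderiv := hR.hasDerivAt_apply_resolvent ht v
    simp only [hv, map_zero, sub_zero] at hderiv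
    exact neg_eq_zero.mp (hderiv.unique (hasDerivAt_const t 0))
  have hlim : Tendsto (fun t => R t v) (𝓝[>] 0) (𝓝 v) := by
    simpa [ContinuousWithinAt, hR.zero_eq_id] using
      ((hR.continuousOn_apply v) 0 self_mem_Ici).mono Ioi_subset_Ici_self
  exact tendsto_nhds_unique hlim
    (tendsto_const_nhds.congr' (eventually_nhdsWithin_of_forall fun t ht => (hvanish t ht).symm))

end Banach

section Hilbert

variable {H : Type*} [NormedAddCommGroup H] [InnerProductSpace ℂ H] [CompleteSpace H]
  {R : ℝ → H →L[ℂ] H}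

theorem isPositive_apply (hR : IsContractionSemigroup R)
    (hsa : ∀ t : ℝ, 0 ≤ t → IsSelfAdjoint (R t)) {t : ℝ} (ht : 0 ≤ t) : (R t).IsPositive := by
  refine ⟨(hsa t ht).isSymmetric, fun v => ?_⟩
  have hhalf : 0 ≤ t / 2 := by positivity
  have hsymm : ∀ x y, ⟪R (t / 2) x, y⟫ = ⟪x, R (t / 2) y⟫ := (hsa _ hhalf).isSymmetric
  have : ⟪R t v, v⟫ = ⟪R (t / 2) v, R (t / 2) v⟫ := by
    rw [← hsymm, hR.apply_apply hhalf hhalf, add_halves]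
  rw [ContinuousLinearMap.reApplyInnerSelf_apply, this]
  exact inner_self_nonneg

theorem resolvent_isPositive (hR : IsContractionSemigroup R)
    (hpos : ∀ t : ℝ, 0 ≤ t → (R t).IsPositive) : hR.resolvent.IsPositive := by
  have hint := hR.integrableOn_exp_neg_smul_apply
  have hinner : ∀ u w, ⟪u, hR.resolvent w⟫ = ∫ s in Ioi 0, ⟪u, Real.exp (-s) • R s w⟫ :=
    fun u w => by rw [resolvent_apply, integral_inner (hint w)]
  refine ⟨fun u w => ?_, fun v => ?_⟩
  · change ⟪hR.resolvent u, w⟫ = ⟪u, hR.resolvent w⟫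
    rw [← inner_conj_symm, hinner, ← integral_conj, hinner]
    refine setIntegral_congr_fun measurableSet_Ioi fun s hs => ?_
    rw [inner_conj_symm, inner_smul_left_eq_smul, inner_smul_right_eq_smul,
      (hpos s (le_of_lt hs)).inner_left_eq_inner_right]
  · rw [ContinuousLinearMap.reApplyInnerSelf_apply, ← inner_re_symm, hinner,
      ← integral_re ((hint v).const_inner v)]
    refine setIntegral_nonneg measurableSet_Ioi fun s hs => ?_
    rw [inner_smul_right_eq_smul, RCLike.smul_re]
    exact mul_nonneg (Real.exp_pos _).le ((hpos s (le_of_lt hs)).re_inner_nonneg_right v)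

end Hilbert

end IsContractionSemigroup

/-- **Self-adjoint contraction semigroups have positive self-adjoint generators.**
If `R : [0,∞) → B(H)` is strongly continuous, `R(0) = I`, each `R(t)` is self-adjoint,
`‖R(t)‖ ≤ 1` and `R(t)R(s) = R(t+s)`, then there exists a densely defined positive
self-adjoint operator `H₀` with `R(t) = exp(−tH₀)` for `t ≥ 0` (expressed by the
generator property `d/dt R(t)v = −R(t) H₀ v` for `v` in the domain of `H₀`); moreover
any vector `Ω` with `R(t)Ω = Ω` for all `t ≥ 0` lies in the domain and `H₀ Ω = 0`. -/
theorem selfadjoint_contraction_semigroup_generator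
    {H : Type*} [NormedAddCommGroup H] [InnerProductSpace ℂ H] [CompleteSpace H]
    (R : ℝ → H →L[ℂ] H)
    (hcont : ∀ v : H, ContinuousOn (fun t : ℝ => R t v) (Set.Ici 0))
    (hzero : R 0 = ContinuousLinearMap.id ℂ H)
    (hsa : ∀ t : ℝ, 0 ≤ t → IsSelfAdjoint (R t))
    (hcontr : ∀ t : ℝ, 0 ≤ t → ‖R t‖ ≤ 1)
    (hsemi : ∀ t s : ℝ, 0 ≤ t → 0 ≤ s → (R t).comp (R s) = R (t + s)) :
    ∃ H₀ : H →ₗ.[ℂ] H,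
      -- densely defined
      Dense (H₀.domain : Set H) ∧
      -- self-adjoint
      H₀.adjoint = H₀ ∧
      -- positive
      (∀ x : H₀.domain, 0 ≤ (⟪H₀ x, (x : H)⟫).re) ∧
      -- `R(t) = exp(−t H₀)`: the semigroup is differentiable on the domain of `H₀`
      -- with derivative `−R(t) H₀`
      (∀ x : H₀.domain, ∀ t : ℝ, 0 < t →
        HasDerivAt (fun s : ℝ => R s (x : H)) (-(R t (H₀ x))) t) ∧
      -- an invariant vector is a ground state: `H₀ Ω = 0`
      (∀ Ω : H, (∀ t : ℝ, 0 ≤ t → R t Ω = Ω) →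
        ∃ hΩ : Ω ∈ H₀.domain, H₀ ⟨Ω, hΩ⟩ = 0) := by
  have hR : IsContractionSemigroup R := ⟨hcont, hzero, hcontr, hsemi⟩
  have hinj := hR.resolvent_injective
  have hpos := hR.resolvent_isPositive fun t ht => hR.isPositive_apply hsa ht
  refine ⟨ContinuousLinearMap.invSubOne hR.resolvent hinj,
    hpos.isSelfAdjoint.denseRange_of_injective hinj,
    ContinuousLinearMap.invSubOne_adjoint hinj hpos.isSelfAdjoint,
    ContinuousLinearMap.re_inner_invSubOne_apply_self_nonneg hinj hpos hR.norm_resolvent_le,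
    fun x t ht => ?_, fun Ω hΩ => ?_⟩
  · obtain ⟨v, hv⟩ : ∃ v, hR.resolvent v = x := x.2
    rw [ContinuousLinearMap.invSubOne_apply hinj hv, ← hv]
    exact hR.hasDerivAt_apply_resolvent ht v
  · have hBΩ := hR.resolvent_apply_eq_self hΩ
    exact ⟨⟨Ω, hBΩ⟩, by rw [ContinuousLinearMap.invSubOne_apply hinj hBΩ, hBΩ, sub_self]⟩
end

section
/- Let μ be a positive self-adjoint operator on a Hilbert space K with μ² ≥ ε·I for some ε > 0, and let F be a (possibly unbounded) nonnegative self-adjoint multiplication-type operator on K with trivial kernel such that ω² := F^{1/2} μ² F^{1/2} is self-adjoint. Then ω² ≥ ε F, and ω² is injective; hence ω = (ω²)^{1/2} is an invertible positive self-adjoint operator. -/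
open scoped ComplexInnerProductSpace

/-- **Invertibility of the one-particle energy operator.** Let `μ` be a positive
self-adjoint operator on a Hilbert space `K` with `μ² ≥ ε·I` for some `ε > 0`, and let
`F` be a nonnegative self-adjoint operator with trivial kernel, with positive self-adjoint
square root `F^{1/2}` (so `F^{1/2} F^{1/2} = F`), such that `ω² := F^{1/2} μ² F^{1/2}`.
Then `ω² ≥ ε F`, `ω²` is injective, and hence any positive self-adjoint square root
`ω = (ω²)^{1/2}` is injective (an invertible positive self-adjoint operator). -/
theorem energy_operator_invertible
    {K : Type*} [NormedAddCommGroup K] [InnerProductSpace ℂ K] [CompleteSpace K]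
    (μ F sqrtF : K →L[ℂ] K) (ε : ℝ) (hε : 0 < ε)
    (hμ_sa : IsSelfAdjoint μ)
    (hμ_pos : ∀ x : K, 0 ≤ (⟪μ x, x⟫).re)
    (hμ_sq_lower : ∀ x : K, ε * ‖x‖ ^ 2 ≤ (⟪μ (μ x), x⟫).re)
    (hF_sa : IsSelfAdjoint F)
    (hF_pos : ∀ x : K, 0 ≤ (⟪F x, x⟫).re)
    (hF_inj : Function.Injective F)
    (hsqrtF_sa : IsSelfAdjoint sqrtF)
    (hsqrtF_pos : ∀ x : K, 0 ≤ (⟪sqrtF x, x⟫).re)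
    (hsqrtF_sq : sqrtF.comp sqrtF = F) :
    -- `ω² = F^{1/2} μ² F^{1/2}` dominates `ε F` ...
    (∀ x : K, ε * (⟪F x, x⟫).re ≤ (⟪sqrtF (μ (μ (sqrtF x))), x⟫).re) ∧
    -- ... and is injective,
    Function.Injective (fun x : K => sqrtF (μ (μ (sqrtF x)))) ∧
    -- hence every positive self-adjoint square root `ω` of `ω²` is injective
    (∀ ω : K →L[ℂ] K, IsSelfAdjoint ω → (∀ x : K, 0 ≤ (⟪ω x, x⟫).re) →
      (∀ x : K, ω (ω x) = sqrtF (μ (μ (sqrtF x)))) → Function.Injective ω) := by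
  have hsF := ContinuousLinearMap.isSelfAdjoint_iff_isSymmetric.mp hsqrtF_sa
  -- key: ⟪F x, x⟫ = ‖sqrtF x‖²
  have hFx : ∀ x : K, (⟪F x, x⟫).re = ‖sqrtF x‖ ^ 2 := by
    intro x
    have : F x = sqrtF (sqrtF x) := by rw [← hsqrtF_sq]; rfl
    have h := hsF (sqrtF x) x
    simp only [ContinuousLinearMap.coe_coe] at h
    rw [this, h, ← inner_self_eq_norm_sq (𝕜 := ℂ) (sqrtF x)]
    simp [inner_self_eq_norm_sq_to_K]
  have key : ∀ x : K, ε * (⟪F x, x⟫).re ≤ (⟪sqrtF (μ (μ (sqrtF x))), x⟫).re := by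
    intro x
    have h := hsF (μ (μ (sqrtF x))) x
    simp only [ContinuousLinearMap.coe_coe] at h
    rw [h, hFx]
    exact hμ_sq_lower (sqrtF x)
  have hzero : ∀ x : K, sqrtF (μ (μ (sqrtF x))) = 0 → x = 0 := by
    intro x hx
    have h1 : ε * (⟪F x, x⟫).re ≤ 0 := by
      have := key x
      rw [hx] at this
      simpa using this
    have h2 : ‖sqrtF x‖ ^ 2 ≤ 0 := by
      rw [hFx] at h1
      nlinarith
    have h3 : sqrtF x = 0 := by
      have : ‖sqrtF x‖ = 0 := by nlinarith [norm_nonneg (sqrtF x)]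
      simpa using this
    have h4 : F x = 0 := by
      have : F x = sqrtF (sqrtF x) := by rw [← hsqrtF_sq]; rfl
      rw [this, h3]; simp
    have h5 : F x = F 0 := by simpa using h4
    exact hF_inj h5
  refine ⟨key, ?_, ?_⟩
  · intro x y hxy
    have h : sqrtF (μ (μ (sqrtF (x - y)))) = 0 := by
      simp only at hxy
      simp [map_sub, hxy]
    have := hzero _ h
    exact sub_eq_zero.mp this
  · intro ω hω_sa hω_pos hω_sq x y hxy
    have h : ω (ω (x - y)) = 0 := by
      simp [map_sub, hxy]
    have h2 : sqrtF (μ (μ (sqrtF (x - y)))) = 0 := by rw [← hω_sq]; exact h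
    have h3 : x - y = 0 := hzero _ h2
    exact sub_eq_zero.mp h3
end
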